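/- arXiv:1712.03182 — 2 statements merged into one kernel-verified Lean document; each statement's English description precedes it below -/
import Mathlib

section
/- For sequences of positive reals (a_n) and (b_n) with a_n, b_n ≥ 2 for all n, if lim (log₂ log₂ a_n)/(log₂ n) = A and lim (log₂ log₂ b_n)/(log₂ n) = B both exist, then lim (log₂ log₂ (a_n · b_n))/(log₂ n) = max(A, B). -/
open Filter Real

/-! Since `log₂ (a b) = log₂ a + log₂ b`, the sequence `log₂ log₂ (a_n b_n)` is a `log₂` of a sum
`u + v`, and `max (log₂ u) (log₂ v) ≤ log₂ (u + v) ≤ 1 + max (log₂ u) (log₂ v)`. After dividing by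
`log₂ n → ∞` the additive error `1` disappears, and the max of the two limits remains. -/

lemma max_logb_le_logb_add {b u v : ℝ} (hb : 1 < b) (hu : 0 < u) (hv : 0 < v) :
    max (logb b u) (logb b v) ≤ logb b (u + v) :=
  max_le (logb_le_logb_of_le hb hu (by linarith)) (logb_le_logb_of_le hb hv (by linarith))

lemma logb_two_add_le_one_add_max {u v : ℝ} (hu : 0 < u) (hv : 0 < v) :
    logb 2 (u + v) ≤ 1 + max (logb 2 u) (logb 2 v) := by
  have hmax : 0 < max u v := lt_max_of_lt_left hu
  calc logb 2 (u + v) ≤ logb 2 (2 * max u v) :=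
        logb_le_logb_of_le one_lt_two (by positivity) (by linarith [le_max_left u v, le_max_right u v])
    _ = 1 + logb 2 (max u v) := by rw [logb_mul two_ne_zero hmax.ne', logb_self_eq_one one_lt_two]
    _ = 1 + max (logb 2 u) (logb 2 v) := by
        rw [(strictMonoOn_logb one_lt_two).monotoneOn.map_max (Set.mem_Ioi.2 hu) (Set.mem_Ioi.2 hv)]

lemma tendsto_div_max_of_le_max_add {ι : Type*} {l : Filter ι} {x y z d : ι → ℝ} {c A B : ℝ}
    (hd : Tendsto d l atTop)
    (hlow : ∀ᶠ i in l, max (x i) (y i) ≤ z i) (hup : ∀ᶠ i in l, z i ≤ max (x i) (y i) + c)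
    (hx : Tendsto (fun i => x i / d i) l (nhds A)) (hy : Tendsto (fun i => y i / d i) l (nhds B)) :
    Tendsto (fun i => z i / d i) l (nhds (max A B)) := by
  have hmax := hx.max hy
  have herr : Tendsto (fun i => max (x i / d i) (y i / d i) + c / d i) l (nhds (max A B)) := by
    simpa using hmax.add (tendsto_const_nhds.div_atTop hd)
  refine tendsto_of_tendsto_of_tendsto_of_le_of_le' hmax herr ?_ ?_
  · filter_upwards [hd.eventually_gt_atTop 0, hlow] with i hdi hi
    rw [max_div_div_right hdi.le]
    exact div_le_div_of_nonneg_right hi hdi.le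
  · filter_upwards [hd.eventually_gt_atTop 0, hup] with i hdi hi
    rw [max_div_div_right hdi.le, ← add_div]
    exact div_le_div_of_nonneg_right hi hdi.le

/-- For sequences of reals `(a_n)`, `(b_n)` with `a_n, b_n ≥ 2`, if
`(log₂ log₂ a_n)/(log₂ n) → A` and `(log₂ log₂ b_n)/(log₂ n) → B`, then
`(log₂ log₂ (a_n·b_n))/(log₂ n) → max A B`. -/
theorem loglog_prod_tendsto_max (a b : ℕ → ℝ) (A B : ℝ)
    (ha2 : ∀ n, 2 ≤ a n) (hb2 : ∀ n, 2 ≤ b n)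
    (hA : Tendsto (fun n : ℕ => logb 2 (logb 2 (a n)) / logb 2 n) atTop (nhds A))
    (hB : Tendsto (fun n : ℕ => logb 2 (logb 2 (b n)) / logb 2 n) atTop (nhds B)) :
    Tendsto (fun n : ℕ => logb 2 (logb 2 (a n * b n)) / logb 2 n) atTop (nhds (max A B)) := by
  have hpos : ∀ {x : ℝ}, 2 ≤ x → 0 < logb 2 x := fun hx => logb_pos one_lt_two (by linarith)
  have hmul : ∀ n, logb 2 (a n * b n) = logb 2 (a n) + logb 2 (b n) := fun n =>
    logb_mul (by linarith [ha2 n]) (by linarith [hb2 n])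
  refine tendsto_div_max_of_le_max_add (c := 1)
    ((tendsto_logb_atTop one_lt_two).comp tendsto_natCast_atTop_atTop)
    (Eventually.of_forall fun n => ?_) (Eventually.of_forall fun n => ?_) hA hB
  · rw [hmul]
    exact max_logb_le_logb_add one_lt_two (hpos (ha2 n)) (hpos (hb2 n))
  · rw [hmul, add_comm _ (1 : ℝ)]
    exact logb_two_add_le_one_add_max (hpos (ha2 n)) (hpos (hb2 n))
end

section
/- Let p = 2^m - 1, and for q ≥ 1 set q_n = ⌈log₂(n)/(2p)⌉ + 1 and define c⁰_q, c¹_q ≥ 0 with c⁰_q + c¹_q = q and c¹_q/q → z/2 as q → ∞ for some z ∈ (0,2]. Suppose log₂ N_n ≤ log₂ K + 2·2^p·(p+1)^(q_n)·log₂ A + α·q_n^λ·4^(c⁰_{q_n})·16^(p·c¹_{q_n}) for constants K, A ≥ 2, α, λ > 0. Then limsup_n (log₂ log₂ N_n)/(log₂ n) ≤ 1/p + z·(1 - 1/(2p)), provided m/(2^m - 1) < z/2. -/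
open Filter Real

set_option maxHeartbeats 2000000 in
/-- The asymptotic computation in the upper bound for the entropy dimension of `X_z`:
with `p = 2^m - 1`, `q_n = ⌈log₂ n/(2p)⌉ + 1`, frequencies `c⁰_q + c¹_q = q`,
`c¹_q/q → z/2`, and the pattern-count bound
`log₂ N_n ≤ log₂ K + 2·2^p·(p+1)^(q_n)·log₂ A + α·q_n^λ·4^(c⁰_{q_n})·16^(p·c¹_{q_n})`,
one gets `limsup (log₂ log₂ N_n)/(log₂ n) ≤ 1/p + z(1 - 1/(2p))`,
provided `m/(2^m - 1) < z/2`. -/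
theorem entropy_dimension_upper_bound
    (m p : ℕ) (hm : 1 ≤ m) (hp : p = 2 ^ m - 1)
    (z : ℝ) (hz0 : 0 < z) (hz2 : z ≤ 2)
    (c0 c1 : ℕ → ℕ) (hsum : ∀ q : ℕ, c0 q + c1 q = q)
    (hc1 : Tendsto (fun q : ℕ => (c1 q : ℝ) / q) atTop (nhds (z / 2)))
    (K A : ℝ) (hK : 2 ≤ K) (hA : 2 ≤ A)
    (α lam : ℝ) (hα : 0 < α) (hlam : 0 < lam)
    (N : ℕ → ℝ) (hN : ∀ n, 1 ≤ N n)
    (hbound : ∀ n : ℕ,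
      logb 2 (N n) ≤ logb 2 K +
        2 * 2 ^ p * ((p : ℝ) + 1) ^ (⌈logb 2 n / (2 * (p : ℝ))⌉₊ + 1) * logb 2 A +
        α * ((⌈logb 2 n / (2 * (p : ℝ))⌉₊ + 1 : ℕ) : ℝ) ^ lam *
          4 ^ (c0 (⌈logb 2 n / (2 * (p : ℝ))⌉₊ + 1)) *
          16 ^ (p * c1 (⌈logb 2 n / (2 * (p : ℝ))⌉₊ + 1)))
    (hmz : (m : ℝ) / (2 ^ m - 1) < z / 2) :
    Filter.limsup (fun n : ℕ => logb 2 (logb 2 (N n)) / logb 2 n) atTop ≤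
      1 / (p : ℝ) + z * (1 - 1 / (2 * (p : ℝ))) := by
  have h2m : 2 ≤ 2 ^ m := by
    calc 2 = 2 ^ 1 := rfl
    _ ≤ 2 ^ m := Nat.pow_le_pow_right (by norm_num) hm
  have hp1 : 1 ≤ p := by omega
  have hpR : (0:ℝ) < p := by exact_mod_cast hp1
  have hpR1 : (1:ℝ) ≤ p := by exact_mod_cast hp1
  have hpe : (p:ℝ) = 2 ^ m - 1 := by
    have h1 : 1 ≤ 2 ^ m := by omega
    subst hp
    push_cast [h1]
    ring
  have hmzp : (m:ℝ) < z / 2 * p := by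
    have hdiv : (m:ℝ) / p < z / 2 := by rw [hpe]; exact hmz
    calc (m:ℝ) = (m / p) * p := by field_simp
    _ < z / 2 * p := by
        apply mul_lt_mul_of_pos_right hdiv hpR
  obtain ⟨T, hTdef⟩ : ∃ T : ℝ, T = 1 / (p : ℝ) + z * (1 - 1 / (2 * (p : ℝ))) := ⟨_, rfl⟩
  rw [show (1 / (p : ℝ) + z * (1 - 1 / (2 * (p : ℝ)))) = T from hTdef.symm]
  have hinv : 1 / (2 * (p:ℝ)) ≤ 1 / 2 := by
    apply one_div_le_one_div_of_le (by norm_num)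
    linarith
  have hinv0 : 0 < 1 / (2 * (p:ℝ)) := by positivity
  have hTz : z ≤ T := by
    have h1 : z * (1 / (2 * (p:ℝ))) ≤ 2 * (1 / (2 * (p:ℝ))) := by
      apply mul_le_mul_of_nonneg_right hz2 (le_of_lt hinv0)
    have h2 : 2 * (1 / (2 * (p:ℝ))) = 1 / p := by field_simp
    have : T = z + (1 / p - z * (1 / (2 * (p:ℝ)))) := by rw [hTdef]; ring
    rw [this]; linarith
  have hT0 : 0 ≤ T := le_trans (le_of_lt hz0) hTz
  -- the key eventual bound
  have key : ∀ ε > (0:ℝ), ∀ᶠ n in atTop,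
      logb 2 (logb 2 (N n)) / logb 2 (n:ℝ) ≤ T + ε := by
    intro ε hε
    obtain ⟨s, hsdef⟩ : ∃ s : ℝ, s = T + ε / 2 := ⟨_, rfl⟩
    have hs0 : 0 < s := by rw [hsdef]; linarith
    have hsm : (m:ℝ) / (2 * p) < s := by
      rw [div_lt_iff₀ (by positivity)]
      have h1 : z / 2 * p ≤ s * (2 * p) := by
        have h' : z / 2 ≤ s * 2 := by rw [hsdef]; linarith
        linarith [mul_le_mul_of_nonneg_right h' hpR.le]
      linarith
    obtain ⟨E, hEdef⟩ : ∃ E : ℝ, E = 2 + (2 * (p:ℝ) - 1) * z := ⟨_, rfl⟩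
    obtain ⟨Δ, hΔdef⟩ : ∃ D : ℝ, D = (p:ℝ) * ε / 4 + (4 * (p:ℝ) - 2) * (ε / 16) := ⟨_, rfl⟩
    have hE0 : 0 ≤ E := by
      rw [hEdef]
      nlinarith [mul_nonneg (show (0:ℝ) ≤ 2*(p:ℝ)-1 by linarith) hz0.le]
    have hΔ0 : 0 ≤ Δ := by
      rw [hΔdef]
      nlinarith [mul_nonneg hpR.le hε.le]
    have hET : E = 2 * p * T := by rw [hEdef, hTdef]; field_simp
    have hEΔ : E + Δ ≤ 2 * p * (T + ε / 4) := by
      rw [hΔdef, hET]; linarith [mul_nonneg hpR.le hε.le]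
    have hLtop : Tendsto (fun n : ℕ => logb 2 (n:ℝ)) atTop atTop :=
      (Real.tendsto_logb_atTop one_lt_two).comp tendsto_natCast_atTop_atTop
    have hlog2 : 0 < Real.log 2 := Real.log_pos one_lt_two
    have hc1e : ∀ᶠ q : ℕ in atTop, (c1 q : ℝ) / q ≤ z / 2 + ε / 16 :=
      hc1.eventually (eventually_le_nhds (by linarith))
    have hloge : ∀ᶠ q : ℕ in atTop, lam * logb 2 (q:ℝ) ≤ ((p:ℝ) * ε / 4) * q := by
      have hc : (0:ℝ) < ((p:ℝ) * ε / 4) * Real.log 2 / lam := by positivity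
      have h := Real.isLittleO_log_id_atTop.def hc
      have h2 := (tendsto_natCast_atTop_atTop (R := ℝ)).eventually h
      filter_upwards [h2, eventually_ge_atTop 1] with q hq hq1
      simp only [id_eq, Real.norm_eq_abs] at hq
      have hq0 : (0:ℝ) < q := by exact_mod_cast hq1
      have habs : Real.log q ≤ ((p:ℝ) * ε / 4) * Real.log 2 / lam * q := by
        calc Real.log q ≤ |Real.log q| := le_abs_self _
        _ ≤ _ * |(q:ℝ)| := hq
        _ = _ * q := by rw [abs_of_pos hq0]
      rw [Real.logb]
      rw [mul_div_assoc']
      rw [div_le_iff₀ hlog2]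
      calc lam * Real.log q ≤ lam * (((p:ℝ) * ε / 4) * Real.log 2 / lam * q) := by
            apply mul_le_mul_of_nonneg_left habs (le_of_lt hlam)
      _ = ((p:ℝ) * ε / 4) * q * Real.log 2 := by
            rw [div_mul_eq_mul_div, mul_div_assoc', mul_comm lam, mul_div_assoc,
              div_self (ne_of_gt hlam), mul_one]
            ring
    obtain ⟨Q, hQ⟩ := eventually_atTop.mp (hc1e.and hloge)
    have ev1 := hLtop.eventually (eventually_ge_atTop 1)
    have ev2 := hLtop.eventually (eventually_ge_atTop (logb 2 (logb 2 K) / s))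
    have ev3 := hLtop.eventually (eventually_ge_atTop
      ((1 + (p:ℝ) + 2 * m + logb 2 (logb 2 A)) / (s - (m:ℝ) / (2 * p))))
    have ev4 := hLtop.eventually (eventually_ge_atTop
      ((logb 2 α + 2 * (E + Δ)) * (4 / ε)))
    have ev5 := hLtop.eventually (eventually_ge_atTop (4 / ε))
    have ev6 := hLtop.eventually (eventually_ge_atTop (2 * (p:ℝ) * Q))
    filter_upwards [ev1, ev2, ev3, ev4, ev5, ev6] with n h1 h2 h3 h4 h5 h6
    set L : ℝ := logb 2 (n:ℝ) with hL
    set q : ℕ := ⌈L / (2 * (p:ℝ))⌉₊ + 1 with hq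
    have hL0 : (0:ℝ) < L := lt_of_lt_of_le one_pos h1
    have hq1 : 1 ≤ q := by omega
    have hq0R : (0:ℝ) < q := by exact_mod_cast hq1
    have hqL : (q:ℝ) ≤ L / (2 * p) + 2 := by
      have h := Nat.ceil_lt_add_one (show (0:ℝ) ≤ L / (2 * (p:ℝ)) by positivity)
      rw [hq]
      push_cast
      linarith
    have hqQ : Q ≤ q := by
      have hx : (Q:ℝ) ≤ L / (2 * (p:ℝ)) := by
        rw [le_div_iff₀ (by positivity)]
        linarith
      have hy : (Q:ℝ) ≤ (⌈L / (2 * (p:ℝ))⌉₊ : ℝ) := hx.trans (Nat.le_ceil _)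
      have : Q ≤ ⌈L / (2 * (p:ℝ))⌉₊ := by exact_mod_cast hy
      omega
    have hc1q : (c1 q : ℝ) ≤ (z / 2 + ε / 16) * q := by
      have hh := (hQ q hqQ).1
      rw [div_le_iff₀ hq0R] at hh
      linarith
    have hlogq : lam * logb 2 (q:ℝ) ≤ ((p:ℝ) * ε / 4) * q := (hQ q hqQ).2
    have hc0q : (c0 q : ℝ) = q - c1 q := by
      have := hsum q
      have : (c0 q : ℝ) + c1 q = q := by exact_mod_cast this
      linarith
    -- bound the three terms by 2 ^ (s * L)
    have hKlog : (0:ℝ) < logb 2 K := Real.logb_pos one_lt_two (by linarith)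
    have hAlog : (0:ℝ) < logb 2 A := Real.logb_pos one_lt_two (by linarith)
    have hbK : logb 2 K ≤ (2:ℝ) ^ (s * L) := by
      rw [← Real.logb_le_iff_le_rpow one_lt_two hKlog]
      rw [div_le_iff₀ hs0] at h2
      linarith
    have hbB : 2 * 2 ^ p * ((p:ℝ) + 1) ^ q * logb 2 A ≤ (2:ℝ) ^ (s * L) := by
      rw [← Real.logb_le_iff_le_rpow one_lt_two (by positivity)]
      have e1 : logb 2 (2 * 2 ^ p * ((p:ℝ) + 1) ^ q * logb 2 A)
          = 1 + p + (q:ℝ) * m + logb 2 (logb 2 A) := by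
        have hm2 : logb 2 ((2:ℝ) ^ m) = m := by
          rw [Real.logb_pow, Real.logb_self_eq_one one_lt_two, mul_one]
        rw [Real.logb_mul (by positivity) (ne_of_gt hAlog),
          Real.logb_mul (by positivity) (by positivity),
          Real.logb_mul (by norm_num) (by positivity),
          Real.logb_pow, show (p:ℝ) + 1 = 2 ^ m from by rw [hpe]; ring,
          Real.logb_pow, hm2, Real.logb_self_eq_one one_lt_two]
        push_cast
        ring
      rw [e1]
      rw [div_le_iff₀ (sub_pos.mpr hsm)] at h3
      have hqm : (q:ℝ) * m ≤ (m:ℝ) / (2 * p) * L + 2 * m := by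
        have := mul_le_mul_of_nonneg_right hqL (by positivity : (0:ℝ) ≤ (m:ℝ))
        calc (q:ℝ) * m ≤ (L / (2 * p) + 2) * m := this
        _ = (m:ℝ) / (2 * p) * L + 2 * m := by ring
      linarith
    have hqlam : (0:ℝ) < (q:ℝ) ^ lam := Real.rpow_pos_of_pos hq0R lam
    have hbC : α * (q:ℝ) ^ lam * 4 ^ (c0 q) * 16 ^ (p * c1 q) ≤ (2:ℝ) ^ (s * L) := by
      rw [← Real.logb_le_iff_le_rpow one_lt_two
        (by positivity : (0:ℝ) < α * (q:ℝ) ^ lam * 4 ^ (c0 q) * 16 ^ (p * c1 q))]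
      have e2 : logb 2 (α * (q:ℝ) ^ lam * 4 ^ (c0 q) * 16 ^ (p * c1 q))
          = logb 2 α + lam * logb 2 (q:ℝ) + 2 * (c0 q : ℝ) + 4 * ((p:ℝ) * c1 q) := by
        rw [Real.logb_mul (by positivity) (by positivity),
          Real.logb_mul (by positivity) (by positivity),
          Real.logb_mul (by positivity) (by positivity),
          Real.logb_rpow_eq_mul_logb_of_pos hq0R,
          Real.logb_pow, Real.logb_pow,
          show (4:ℝ) = 2 ^ (2:ℕ) from by norm_num,
          show (16:ℝ) = 2 ^ (4:ℕ) from by norm_num,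
          Real.logb_pow, Real.logb_pow, Real.logb_self_eq_one one_lt_two]
        push_cast
        ring
      rw [e2]
      have step1 : 2 * (c0 q : ℝ) + 4 * ((p:ℝ) * c1 q) ≤ (E + (4 * (p:ℝ) - 2) * (ε/16)) * q := by
        rw [hc0q]
        have h4p2 : (0:ℝ) ≤ 4 * (p:ℝ) - 2 := by linarith
        have := mul_le_mul_of_nonneg_left hc1q h4p2
        rw [hEdef]
        linarith
      have step2 : (E + (4 * (p:ℝ) - 2) * (ε/16)) * q + ((p:ℝ) * ε / 4) * q
          = (E + Δ) * q := by rw [hΔdef]; ring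
      have step3 : (E + Δ) * q ≤ (E + Δ) * (L / (2 * p) + 2) :=
        mul_le_mul_of_nonneg_left hqL (by linarith)
      have step4 : (E + Δ) * (L / (2 * p)) ≤ (T + ε / 4) * L := by
        have h2p : (0:ℝ) < 2 * p := by positivity
        rw [div_eq_mul_inv, ← mul_assoc]
        have hLinv : (0:ℝ) ≤ L := le_of_lt hL0
        have : (E + Δ) * L ≤ 2 * p * (T + ε / 4) * L :=
          mul_le_mul_of_nonneg_right hEΔ hLinv
        calc (E + Δ) * L * (2 * (p:ℝ))⁻¹ ≤ 2 * p * (T + ε / 4) * L * (2 * (p:ℝ))⁻¹ := by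
              apply mul_le_mul_of_nonneg_right this (by positivity)
        _ = (T + ε / 4) * L := by field_simp
      have step5 : logb 2 α + 2 * (E + Δ) ≤ ε / 4 * L := by
        have := mul_le_mul_of_nonneg_right h4 (le_of_lt (show (0:ℝ) < ε/4 by positivity))
        calc logb 2 α + 2 * (E + Δ) = (logb 2 α + 2 * (E + Δ)) * (4 / ε) * (ε / 4) := by
              field_simp
        _ ≤ L * (ε / 4) := this
        _ = ε / 4 * L := by ring
      have expand : (E + Δ) * (L / (2 * p) + 2)
          = (E + Δ) * (L / (2 * p)) + 2 * (E + Δ) := by ring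
      have hfin : logb 2 α + lam * logb 2 (q:ℝ) + 2 * (c0 q : ℝ) + 4 * ((p:ℝ) * c1 q)
          ≤ logb 2 α + (E + Δ) * (L / (2 * p)) + 2 * (E + Δ) := by
        have := step3
        rw [expand] at this
        linarith [step1, hlogq, step2.ge, step2.le]
      calc logb 2 α + lam * logb 2 (q:ℝ) + 2 * (c0 q : ℝ) + 4 * ((p:ℝ) * c1 q)
          ≤ logb 2 α + (E + Δ) * (L / (2 * p)) + 2 * (E + Δ) := hfin
      _ ≤ (T + ε / 4) * L + ε / 4 * L := by linarith [step4, step5]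
      _ = s * L := by rw [hsdef]; ring
    -- combine
    have hb' := hbound n
    rw [← hL, ← hq] at hb'
    have hrp : (0:ℝ) < (2:ℝ) ^ (s * L) := Real.rpow_pos_of_pos two_pos _
    have htot : logb 2 (N n) ≤ (2:ℝ) ^ (s * L + 2) := by
      have h3R : 3 * (2:ℝ) ^ (s * L) ≤ (2:ℝ) ^ (s * L + 2) := by
        rw [Real.rpow_add two_pos]
        have h42 : (2:ℝ) ^ (2:ℝ) = 4 := by
          have hc : ((2:ℕ):ℝ) = (2:ℝ) := by norm_num
          rw [← hc, Real.rpow_natCast]; norm_num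
        rw [h42]
        linarith [hrp]
      calc logb 2 (N n) ≤ logb 2 K + 2 * 2 ^ p * ((p:ℝ) + 1) ^ q * logb 2 A
            + α * (q:ℝ) ^ lam * 4 ^ (c0 q) * 16 ^ (p * c1 q) := hb'
      _ ≤ 3 * (2:ℝ) ^ (s * L) := by linarith
      _ ≤ (2:ℝ) ^ (s * L + 2) := h3R
    have hnum : logb 2 (logb 2 (N n)) ≤ s * L + 2 := by
      rcases le_or_gt (logb 2 (N n)) 1 with hle | hgt
      · have hle0 : logb 2 (logb 2 (N n)) ≤ 0 :=
          Real.logb_nonpos one_lt_two (Real.logb_nonneg one_lt_two (hN n)) hle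
        linarith [mul_pos hs0 hL0]
      · calc logb 2 (logb 2 (N n)) ≤ logb 2 ((2:ℝ) ^ (s * L + 2)) :=
              Real.logb_le_logb_of_le one_lt_two (by linarith) htot
        _ = s * L + 2 := Real.logb_rpow two_pos (by norm_num)
    rw [div_le_iff₀ hL0]
    have h2eL : 2 ≤ ε / 2 * L := by
      have := mul_le_mul_of_nonneg_left h5 (le_of_lt (show (0:ℝ) < ε/2 by positivity))
      calc (2:ℝ) = ε / 2 * (4 / ε) := by field_simp; ring
      _ ≤ ε / 2 * L := this
    calc logb 2 (logb 2 (N n)) ≤ s * L + 2 := hnum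
    _ ≤ (T + ε) * L := by rw [hsdef]; linarith [h2eL]
  -- limsup argument
  rw [Filter.limsup_eq]
  by_cases hbdd : BddBelow { a | ∀ᶠ n in atTop,
      logb 2 (logb 2 (N n)) / logb 2 (n:ℝ) ≤ a }
  · by_contra hlt
    push_neg at hlt
    set I := sInf { a | ∀ᶠ n in atTop, logb 2 (logb 2 (N n)) / logb 2 (n:ℝ) ≤ a }
    have hε : (0:ℝ) < (I - T) / 2 := by simp only [I] at hlt ⊢; linarith
    have hmem := key _ hε
    have := csInf_le hbdd (by exact_mod_cast hmem :
      T + (I - T) / 2 ∈ { a | ∀ᶠ n in atTop, logb 2 (logb 2 (N n)) / logb 2 (n:ℝ) ≤ a })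
    simp only [I] at this hlt
    linarith
  · rw [Real.sInf_of_not_bddBelow hbdd]
    exact hT0
end
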